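/- arXiv:1309.7442 — 2 statements merged into one kernel-verified Lean document; each statement's English description precedes it below -/
import Mathlib

section
/- For characters σ, λ of G and integers t, l ≥ 1, V_t(σ) ≅ V_l(λ) as H-modules if and only if t = l and σ = λ. -/
open scoped TensorProduct

/-- The Hopf–Ore extension `H = kG(χ⁻¹, a, 0)` of a group algebra `kG`:
`H` is generated by (the image of) `G` and `x` with relation `x g = χ⁻¹(g) g x`,
`a` is central in `G` with `χ(a) ≠ 1`, and the elements `g x^i` form a `k`-basis. -/
structure HopfOreExt (k G H : Type*) [Field k] [Group G] [Ring H] [Algebra k H] where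
  ι : G →* H
  x : H
  a : G
  χ : G →* kˣ
  ha_central : ∀ g : G, a * g = g * a
  hχa : (χ a : k) ≠ 1
  rel : ∀ g : G, x * ι g = (χ g : k)⁻¹ • (ι g * x)
  bas : Module.Basis (G × ℕ) k H
  bas_eq : ∀ p : G × ℕ, bas p = ι p.1 * x ^ p.2

variable {k G H : Type*} [Field k] [Group G] [Ring H] [Algebra k H]

/-- A module is a weight module iff it is spanned by weight vectors. -/
def IsWeightModule (D : HopfOreExt k G H) (M : Type*) [AddCommGroup M] [Module k M]
    [Module H M] [IsScalarTower k H M] : Prop :=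
  Submodule.span k {v : M | ∃ lam : G →* kˣ, ∀ g : G, D.ι g • v = (lam g : k) • v} = ⊤

/-- `M` realizes `V_t(λ) = M(λ)/(x^t · M(λ))`: it has a `k`-basis `m_0, …, m_{t-1}` with
`g • m_i = χ(g)^i λ(g) • m_i`, `x • m_i = m_{i+1}` for `i < t - 1` and `x • m_{t-1} = 0`. -/
def IsVt (D : HopfOreExt k G H) (lam : G →* kˣ) (t : ℕ)
    (M : Type*) [AddCommGroup M] [Module k M] [Module H M] [IsScalarTower k H M] : Prop :=
  ∃ (b : Module.Basis (Fin t) k M) (m : ℕ → M),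
    (∀ i : Fin t, m (i : ℕ) = b i) ∧
    (∀ i < t, ∀ g : G, D.ι g • m i = ((D.χ g : k) ^ i * (lam g : k)) • m i) ∧
    (∀ i : ℕ, i + 1 < t → D.x • m i = m (i + 1)) ∧
    D.x • m (t - 1) = 0

section Aux

variable {M : Type*} [AddCommGroup M] [Module k M] [Module H M] [IsScalarTower k H M]

lemma hsmul_comm' (c : k) (h : H) (w : M) : h • (c • w) = c • (h • w) := by
  rw [← algebraMap_smul H c w, ← mul_smul, ← Algebra.commutes, mul_smul, algebraMap_smul]

/-- `smul` by a fixed `h : H` as a `k`-linear map. -/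
def smulLin (h : H) : M →ₗ[k] M where
  toFun w := h • w
  map_add' := smul_add h
  map_smul' c w := hsmul_comm' c h w

/-- action on a fixed vector as a `k`-linear map in the ring element. -/
def actLin (w : M) : H →ₗ[k] M where
  toFun h := h • w
  map_add' h1 h2 := add_smul h1 h2 w
  map_smul' c h := smul_assoc c h w

omit [Module k M] [IsScalarTower k H M] in
lemma pow_smul_chain (D : HopfOreExt k G H) (l : ℕ) (m : ℕ → M)
    (hx : ∀ i : ℕ, i + 1 < l → D.x • m i = m (i + 1)) :
    ∀ s i, i + s < l → D.x ^ s • m i = m (i + s) := by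
  intro s
  induction s with
  | zero => intro i _; simp
  | succ n ih =>
      intro i h
      rw [pow_succ, mul_smul, hx i (by omega), ih (i + 1) (by omega)]
      congr 1
      omega

omit [Module k M] [IsScalarTower k H M] in
lemma pow_smul_zero (D : HopfOreExt k G H) (l : ℕ) (m : ℕ → M)
    (hx : ∀ i : ℕ, i + 1 < l → D.x • m i = m (i + 1)) (hxl : D.x • m (l - 1) = 0) :
    ∀ s i, 1 ≤ s → i < l → l ≤ i + s → D.x ^ s • m i = 0 := by
  intro s i hs hi hls
  have hr : s = (s - (l - i)) + ((l - 1 - i) + 1) := by omega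
  rw [hr, pow_add, mul_smul, pow_succ', mul_smul,
    pow_smul_chain D l m hx (l - 1 - i) i (by omega)]
  have hEq : i + (l - 1 - i) = l - 1 := by omega
  rw [hEq, hxl, smul_zero]

end Aux

/-- `V_t(σ) ≅ V_l(λ)` as `H`-modules if and only if `t = l` and `σ = λ`. -/
theorem vt_iso_iff (D : HopfOreExt k G H) (sig lam : G →* kˣ) (t l : ℕ)
    (ht : 1 ≤ t) (hl : 1 ≤ l)
    (M N : Type*) [AddCommGroup M] [Module k M] [Module H M] [IsScalarTower k H M]
    [AddCommGroup N] [Module k N] [Module H N] [IsScalarTower k H N]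
    (hM : IsVt D sig t M) (hN : IsVt D lam l N) :
    Nonempty (M ≃ₗ[H] N) ↔ (t = l ∧ sig = lam) := by
  obtain ⟨b, m, hm, hg, hx, hxl⟩ := hM
  obtain ⟨b', m', hm', hg', hx', hxl'⟩ := hN
  constructor
  · rintro ⟨f⟩
    have fsmulk : ∀ (c : k) (w : M), f (c • w) = c • f w := by
      intro c w
      rw [← algebraMap_smul H c w, map_smul, algebraMap_smul]
    let fk : M ≃ₗ[k] N :=
      { toFun := f, map_add' := map_add f, map_smul' := fsmulk,
        invFun := f.symm, left_inv := f.left_inv, right_inv := f.right_inv }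
    have htl : t = l := by
      have h1 : Module.finrank k M = t := by
        rw [Module.finrank_eq_card_basis b, Fintype.card_fin]
      have h2 : Module.finrank k N = l := by
        rw [Module.finrank_eq_card_basis b', Fintype.card_fin]
      rw [← h1, ← h2, fk.finrank_eq]
    subst htl
    refine ⟨rfl, ?_⟩
    set v : N := f (m 0) with hv
    have hvsum : v = ∑ i : Fin t, b'.repr v i • b' i := (b'.sum_repr v).symm
    -- x^(t-1) • v = c₀ • b' (t-1)
    have key : D.x ^ (t - 1) • v = b'.repr v ⟨0, ht⟩ • b' ⟨t - 1, by omega⟩ := by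
      conv_lhs => rw [hvsum]
      rw [Finset.smul_sum, Finset.sum_eq_single (⟨0, ht⟩ : Fin t)]
      · rw [hsmul_comm']
        congr 1
        rw [← hm' ⟨0, ht⟩, ← hm' ⟨t - 1, by omega⟩]
        have := pow_smul_chain D t m' hx' (t - 1) 0 (by omega)
        simpa using this
      · intro i _ hi
        have hi0 : 1 ≤ (i : ℕ) := by
          rcases Nat.eq_zero_or_pos (i : ℕ) with h0 | h0
          · exact absurd (Fin.ext h0) hi
          · exact h0
        rw [hsmul_comm', ← hm' i,
          pow_smul_zero D t m' hx' hxl' (t - 1) i (by omega) i.isLt (by omega), smul_zero]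
      · intro h; exact absurd (Finset.mem_univ _) h
    have hne : D.x ^ (t - 1) • v ≠ 0 := by
      have heq : D.x ^ (t - 1) • v = f (m (t - 1)) := by
        rw [hv, ← map_smul f]
        congr 1
        have := pow_smul_chain D t m hx (t - 1) 0 (by omega)
        simpa using this
      rw [heq]
      intro h0
      have hmz : m (t - 1) = 0 := f.injective (by simpa using h0)
      have : b ⟨t - 1, by omega⟩ = (0 : M) := by
        rw [← hm ⟨t - 1, by omega⟩]; exact hmz
      exact b.ne_zero ⟨t - 1, by omega⟩ this
    have hc0 : b'.repr v ⟨0, ht⟩ ≠ 0 := by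
      intro h; apply hne; rw [key, h, zero_smul]
    have heig : ∀ g : G, D.ι g • v = (sig g : k) • v := by
      intro g
      rw [hv, ← map_smul f, ← fsmulk]
      congr 1
      have := hg 0 ht g
      simpa using this
    have hdiag : ∀ g : G, ∀ j : Fin t,
        ((D.χ g : k) ^ (j : ℕ) * (lam g : k)) * b'.repr v j = (sig g : k) * b'.repr v j := by
      intro g j
      have expand : D.ι g • v
          = ∑ i : Fin t, (((D.χ g : k) ^ (i : ℕ) * (lam g : k)) * b'.repr v i) • b' i := by
        conv_lhs => rw [hvsum]
        rw [Finset.smul_sum]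
        refine Finset.sum_congr rfl fun i _ => ?_
        rw [hsmul_comm', ← hm' i, hg' i i.isLt g, smul_smul]
        rw [mul_comm (b'.repr v i)]
      have h1 : b'.repr (D.ι g • v) j
          = ((D.χ g : k) ^ (j : ℕ) * (lam g : k)) * b'.repr v j := by
        rw [expand]
        exact congrFun (b'.repr_sum_self _) j
      have h2 : b'.repr (D.ι g • v) j = (sig g : k) * b'.repr v j := by
        rw [heig g, map_smul]
        simp [smul_eq_mul]
      rw [← h1, h2]
    refine MonoidHom.ext fun g => Units.ext ?_
    have := hdiag g ⟨0, ht⟩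
    simp only [Fin.val_mk, pow_zero, one_mul] at this
    exact (mul_right_cancel₀ hc0 this.symm)
  · rintro ⟨rfl, rfl⟩
    let e : M ≃ₗ[k] N := b.equiv b' (Equiv.refl _)
    have he : ∀ i, e (b i) = b' i := fun i => b.equiv_apply i b' (Equiv.refl _)
    have keyx : ∀ w : M, e (D.x • w) = D.x • e w := by
      have hcomp : (e.toLinearMap ∘ₗ smulLin (k := k) D.x)
          = ((smulLin (k := k) D.x) ∘ₗ e.toLinearMap) := by
        apply Module.Basis.ext b
        intro i
        show e (D.x • b i) = D.x • e (b i)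
        rw [he]
        by_cases hi : (i : ℕ) + 1 < t
        · rw [← hm i, hx i hi, ← hm' i, hx' i hi,
            show m ((i : ℕ) + 1) = b ⟨(i : ℕ) + 1, hi⟩ from hm ⟨(i : ℕ) + 1, hi⟩,
            show m' ((i : ℕ) + 1) = b' ⟨(i : ℕ) + 1, hi⟩ from hm' ⟨(i : ℕ) + 1, hi⟩, he]
        · have hieq : (i : ℕ) = t - 1 := by omega
          rw [← hm i, ← hm' i, hieq, hxl, hxl', map_zero]
      intro w
      exact LinearMap.congr_fun hcomp w
    have keyg : ∀ (g : G) (w : M), e (D.ι g • w) = D.ι g • e w := by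
      intro g
      have hcomp : (e.toLinearMap ∘ₗ smulLin (k := k) (D.ι g))
          = ((smulLin (k := k) (D.ι g)) ∘ₗ e.toLinearMap) := by
        apply Module.Basis.ext b
        intro i
        show e (D.ι g • b i) = D.ι g • e (b i)
        rw [he, ← hm i, ← hm' i, hg i i.isLt g, hg' i i.isLt g, map_smul,
          hm i, hm' i, he]
      intro w
      exact LinearMap.congr_fun hcomp w
    have keypow : ∀ (j : ℕ) (w : M), e (D.x ^ j • w) = D.x ^ j • e w := by
      intro j
      induction j with
      | zero => intro w; simp
      | succ n ih =>
          intro w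
          rw [pow_succ, mul_smul, mul_smul, ih, keyx]
    have keyH : ∀ (h : H) (w : M), e (h • w) = h • e w := by
      intro h w
      have hcomp : (e.toLinearMap ∘ₗ actLin (k := k) (H := H) w) = actLin (k := k) (H := H) (e w) := by
        apply Module.Basis.ext D.bas
        intro p
        show e (D.bas p • w) = D.bas p • e w
        rw [D.bas_eq, mul_smul, mul_smul, keyg, keypow]
      exact LinearMap.congr_fun hcomp h
    exact ⟨{ toFun := e, map_add' := map_add e, map_smul' := keyH,
             invFun := e.symm, left_inv := e.left_inv, right_inv := e.right_inv }⟩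
end

section
/- Let M be a weight H-module all of whose composition factors are one dimensional. Then x·M = rad(M), the Jacobson radical of M. -/
open scoped TensorProduct

variable {k G H : Type*} [Field k] [Group G] [Ring H] [Algebra k H]

section Aux

variable {M : Type*} [AddCommGroup M] [Module k M] [Module H M] [IsScalarTower k H M]

/-- `k`-scalars commute with `H`-scalars. -/
lemma hsmul_ksmul (c : k) (h : H) (m : M) : h • (c • m) = c • (h • m) := by
  have h1 : c • m = (c • (1 : H)) • m := by rw [smul_assoc, one_smul]
  rw [h1, ← mul_smul, mul_smul_comm, mul_one, smul_assoc]

/-- A vector killed by `x` and scaled by all `ι g` spans an `H`-stable line. -/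
lemma aux_span (D : HopfOreExt k G H) (w : M) (hx : D.x • w = 0) (lam : G →* kˣ)
    (hg : ∀ g : G, D.ι g • w = (lam g : k) • w) (h : H) :
    h • w ∈ Submodule.span k {w} := by
  have hb : ∀ p : G × ℕ, D.bas p • w ∈ Submodule.span k {w} := by
    rintro ⟨g, i⟩
    rw [D.bas_eq]
    cases i with
    | zero =>
      simp only [pow_zero, mul_one, hg g]
      exact Submodule.smul_mem _ _ (Submodule.mem_span_singleton_self w)
    | succ n =>
      have hxp : (D.x ^ (n + 1)) • w = 0 := by
        rw [pow_succ, mul_smul, hx, smul_zero]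
      rw [mul_smul, hxp, smul_zero]
      exact Submodule.zero_mem _
  have hmem : h ∈ Submodule.span k (Set.range D.bas) := by
    rw [D.bas.span_eq]; trivial
  induction hmem using Submodule.span_induction with
  | mem y hy => obtain ⟨p, rfl⟩ := hy; exact hb p
  | zero => rw [zero_smul]; exact Submodule.zero_mem _
  | add y z _ _ hy hz => rw [add_smul]; exact Submodule.add_mem _ hy hz
  | smul c y _ hy => rw [smul_assoc]; exact Submodule.smul_mem _ _ hy

end Aux

/-- If all composition factors of a finite dimensional weight `H`-module `M` are
one-dimensional, then `x • M` is the radical of `M` (the intersection of the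
maximal submodules). -/
theorem x_smul_eq_radical (D : HopfOreExt k G H)
    (M : Type*) [AddCommGroup M] [Module k M] [Module H M] [IsScalarTower k H M]
    [Module.Finite k M] (hw : IsWeightModule D M)
    (hcf : ∀ N₁ N₂ : Submodule H M, N₁ ⋖ N₂ →
      Module.finrank k N₂ = Module.finrank k N₁ + 1) :
    Submodule.span H {m : M | ∃ u : M, m = D.x • u}
      = sInf {N : Submodule H M | IsCoatom N} := by
  classical
  set W : Set M := {v | ∃ lam : G →* kˣ, ∀ g : G, D.ι g • v = (lam g : k) • v} with hWdef
  set X : Submodule H M := Submodule.span H {m : M | ∃ u : M, m = D.x • u} with hXdef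
  -- finrank facts for coatoms
  have hdim : ∀ N : Submodule H M, IsCoatom N →
      Module.finrank k M = Module.finrank k (N.restrictScalars k) + 1 := by
    intro N hN
    have hcov : N ⋖ (⊤ : Submodule H M) :=
      ⟨lt_top_iff_ne_top.mpr hN.1, fun c hc hlt => lt_irrefl (⊤ : Submodule H M)
        ((hN.2 c hc) ▸ hlt)⟩
    have h1 := hcf N ⊤ hcov
    have e1 : Module.finrank k (⊤ : Submodule H M) = Module.finrank k M :=
      (((Submodule.topEquiv : (⊤ : Submodule H M) ≃ₗ[H] M)).restrictScalars k).finrank_eq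
    have e2 : Module.finrank k (N.restrictScalars k) = Module.finrank k N := by
      have e : (N.restrictScalars k) ≃ₗ[H] N := Submodule.restrictScalarsEquiv k H M N
      exact (e.restrictScalars k).finrank_eq
    rw [← e1, h1, e2]
  -- Key step: for any coatom N, x • M ⊆ N
  have key : ∀ N : Submodule H M, IsCoatom N → ∀ u : M, D.x • u ∈ N := by
    intro N hN
    obtain ⟨m, hmW, hmN⟩ : ∃ m, m ∈ W ∧ m ∉ N := by
      by_contra hcon
      push_neg at hcon
      have hle : Submodule.span k W ≤ N.restrictScalars k := Submodule.span_le.mpr hcon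
      rw [hw] at hle
      exact hN.1 (Submodule.eq_top_iff'.mpr fun m => hle trivial)
    obtain ⟨lam, hlam⟩ := hmW
    set N' : Submodule k M := N.restrictScalars k with hN'def
    have hmN' : m ∉ N' := hmN
    have hsup : N' ⊔ Submodule.span k {m} = ⊤ := by
      have hlt : N' < N' ⊔ Submodule.span k {m} := by
        refine lt_of_le_of_ne le_sup_left fun he => hmN' ?_
        rw [he]
        exact Submodule.mem_sup_right (Submodule.mem_span_singleton_self m)
      have hfin : Module.finrank k N' < Module.finrank k (N' ⊔ Submodule.span k {m} : Submodule k M) :=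
        Submodule.finrank_lt_finrank_of_lt hlt
      have h2 := hdim N hN
      rw [← hN'def] at h2
      apply Submodule.eq_top_of_finrank_eq
      have h3 : Module.finrank k (N' ⊔ Submodule.span k {m} : Submodule k M) ≤ Module.finrank k M :=
        Submodule.finrank_le _
      omega
    -- decompose x • m
    have hxm : D.x • m ∈ N := by
      have hmem : D.x • m ∈ N' ⊔ Submodule.span k {m} := hsup ▸ Submodule.mem_top
      obtain ⟨n₀, hn₀, z, hz, he⟩ := Submodule.mem_sup.mp hmem
      obtain ⟨c, rfl⟩ := Submodule.mem_span_singleton.mp hz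
      have hχ0 : (D.χ D.a : k) ≠ 0 := Units.ne_zero _
      have hrel : D.ι D.a * D.x = (D.χ D.a : k) • (D.x * D.ι D.a) := by
        rw [D.rel, smul_smul, mul_inv_cancel₀ hχ0, one_smul]
      have e1 : D.ι D.a • (D.x • m) = ((D.χ D.a : k) * (lam D.a : k)) • (D.x • m) := by
        rw [← mul_smul, hrel, smul_assoc, mul_smul, hlam D.a, hsmul_ksmul, smul_smul]
      rw [← he] at e1
      rw [smul_add, smul_add, hsmul_ksmul, hlam D.a, smul_smul, smul_smul] at e1
      -- e1 : ι a • n₀ + (c * lam a) • m = (χa*lam a) • n₀ + ((χa*lam a) * c) • m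
      have E : (c * (lam D.a : k) - (D.χ D.a : k) * (lam D.a : k) * c) • m
          = ((D.χ D.a : k) * (lam D.a : k)) • n₀ - D.ι D.a • n₀ := by
        rw [sub_smul, sub_eq_sub_iff_add_eq_add, add_comm]
        exact e1
      have hcoef : (c * (lam D.a : k) - (D.χ D.a : k) * (lam D.a : k) * c) • m ∈ N' := by
        rw [E]
        exact Submodule.sub_mem _ (Submodule.smul_mem _ _ hn₀) (N.smul_mem (D.ι D.a) hn₀)
      have hc : c = 0 := by
        by_contra hc
        have hne : (c * (lam D.a : k) - (D.χ D.a : k) * (lam D.a : k) * c) ≠ 0 := by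
          intro h0
          have h1 : c * (lam D.a : k) * (1 - (D.χ D.a : k)) = 0 := by linear_combination h0
          rcases mul_eq_zero.mp h1 with h2 | h2
          · rcases mul_eq_zero.mp h2 with h3 | h3
            · exact hc h3
            · exact Units.ne_zero _ h3
          · exact D.hχa (sub_eq_zero.mp h2).symm
        apply hmN'
        have := N'.smul_mem (c * (lam D.a : k) - (D.χ D.a : k) * (lam D.a : k) * c)⁻¹ hcoef
        rwa [smul_smul, inv_mul_cancel₀ hne, one_smul] at this
      rw [hc, zero_smul, add_zero] at he
      rw [← he]; exact hn₀
    intro u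
    have humem : u ∈ N' ⊔ Submodule.span k {m} := hsup ▸ Submodule.mem_top
    obtain ⟨n, hn, z, hz, he⟩ := Submodule.mem_sup.mp humem
    obtain ⟨c, rfl⟩ := Submodule.mem_span_singleton.mp hz
    rw [← he, smul_add, hsmul_ksmul]
    exact N.add_mem (N.smul_mem D.x hn) (N'.smul_mem c hxm)
  apply le_antisymm
  · refine le_sInf fun N hN => Submodule.span_le.mpr ?_
    rintro _ ⟨u, rfl⟩
    exact key N hN u
  · -- rad ≤ X
    intro z hz
    by_contra hzX
    set Q := M ⧸ X with hQdef
    set π : M →ₗ[H] Q := X.mkQ with hπdef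
    have hπzero : ∀ v : M, π v = 0 ↔ v ∈ X := fun v => Submodule.Quotient.mk_eq_zero X
    have hzQ : π z ≠ 0 := fun h => hzX ((hπzero z).mp h)
    have hxw : ∀ v : M, D.x • (π v) = 0 := by
      intro v
      rw [← map_smul]
      exact (hπzero _).mpr (Submodule.subset_span ⟨v, rfl⟩)
    -- each weight vector image spans an atom or is zero
    have hatom : ∀ v : M, v ∈ W → π v ≠ 0 → IsAtom (Submodule.span H {π v}) := by
      rintro v ⟨lam, hlam⟩ h0
      have hlam' : ∀ g : G, D.ι g • (π v) = (lam g : k) • (π v) := by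
        intro g
        rw [← π.map_smul, hlam g]
        exact map_smul (π.restrictScalars k) (lam g : k) v
      constructor
      · rw [ne_eq, Submodule.span_singleton_eq_bot]; exact h0
      · intro B hB
        rw [eq_bot_iff]
        intro b hb
        have hbS : b ∈ Submodule.span H {π v} := hB.le hb
        obtain ⟨h, rfl⟩ := Submodule.mem_span_singleton.mp hbS
        have hbk : h • π v ∈ Submodule.span k {π v} :=
          aux_span D (π v) (hxw v) lam hlam' h
        obtain ⟨c, hc⟩ := Submodule.mem_span_singleton.mp hbk
        by_cases hc0 : c = 0
        · rw [← hc, hc0, zero_smul]; exact Submodule.zero_mem _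
        · exfalso
          apply hB.ne
          refine le_antisymm hB.le (Submodule.span_le.mpr ?_)
          rintro _ rfl
          have h1 : c⁻¹ • (h • π v) ∈ B := by
            have h2 : c⁻¹ • (h • π v) = (c⁻¹ • (1 : H)) • (h • π v) := by
              rw [smul_assoc, one_smul]
            rw [h2]
            exact B.smul_mem _ hb
          rwa [← hc, smul_smul, inv_mul_cancel₀ hc0, one_smul] at h1
    -- semisimplicity of Q
    have htop : sSup {S : Submodule H Q | IsSimpleModule H S} = ⊤ := by
      rw [eq_top_iff]
      intro q _
      have himg : Submodule.span k ((π.restrictScalars k) '' W) = ⊤ := by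
        rw [Submodule.span_image, hw, Submodule.map_top, LinearMap.range_eq_top]
        exact Submodule.mkQ_surjective X
      have hle : Submodule.span k ((π.restrictScalars k) '' W)
          ≤ (sSup {S : Submodule H Q | IsSimpleModule H S}).restrictScalars k := by
        refine Submodule.span_le.mpr ?_
        rintro _ ⟨v, hv, rfl⟩
        by_cases h0 : π v = 0
        · show π v ∈ _
          rw [h0]; exact Submodule.zero_mem _
        · show π v ∈ sSup {S : Submodule H Q | IsSimpleModule H S}
          have hA := hatom v hv h0
          have : Submodule.span H {π v} ≤ sSup {S : Submodule H Q | IsSimpleModule H S} :=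
            le_sSup (by rw [Set.mem_setOf_eq, isSimpleModule_iff_isAtom]; exact hA)
          exact this (Submodule.mem_span_singleton_self (π v))
      have : q ∈ Submodule.span k ((π.restrictScalars k) '' W) := by rw [himg]; trivial
      exact hle this
    have hss : IsSemisimpleModule H Q := IsSemisimpleModule.of_sSup_simples_eq_top htop
    -- find an atom below span of π z, take a complement, pull back
    have hne : Submodule.span H {π z} ≠ ⊥ := by
      rw [ne_eq, Submodule.span_singleton_eq_bot]; exact hzQ
    obtain ⟨S, hS, hSle⟩ :=
      ((isAtomic_of_complementedLattice (α := Submodule H Q)).eq_bot_or_exists_atom_le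
        (Submodule.span H {π z})).resolve_left hne
    obtain ⟨C, hC⟩ := exists_isCompl S
    have hCco : IsCoatom C := hC.isAtom_iff_isCoatom.mp hS
    have hzC : π z ∉ C := by
      intro hmem
      have hle : Submodule.span H {π z} ≤ C := Submodule.span_le.mpr (by
        rintro _ rfl; exact hmem)
      have hSbot : S = ⊥ := hC.disjoint.eq_bot_of_le (hSle.trans hle)
      exact hS.1 hSbot
    set N : Submodule H M := C.comap π with hNdef
    have hXN : X ≤ N := by
      intro v hv
      have : π v = 0 := (hπzero v).mpr hv
      show π v ∈ C
      rw [this]; exact C.zero_mem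
    have hNco : IsCoatom N := by
      constructor
      · intro hNT
        apply hCco.1
        rw [eq_top_iff]
        rintro q _
        obtain ⟨v, rfl⟩ := Submodule.mkQ_surjective X q
        have : v ∈ N := hNT ▸ Submodule.mem_top
        exact this
      · intro B hB
        have hXB : X ≤ B := hXN.trans hB.le
        have hCmapN : Submodule.map π N = C := by
          apply Submodule.map_comap_eq_self
          rw [Submodule.range_mkQ]
          exact le_top
        have h1 : C < Submodule.map π B := by
          refine lt_of_le_of_ne (hCmapN ▸ Submodule.map_mono hB.le) fun hEq => ?_
          have h2 : B ≤ N := by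
            intro b hb
            show π b ∈ C
            rw [hEq]
            exact Submodule.mem_map_of_mem hb
          exact (lt_irrefl N) (lt_of_lt_of_le hB h2)
        have h2 : Submodule.map π B = ⊤ := hCco.2 _ h1
        have h3 : Submodule.comap π (Submodule.map π B) = B := by
          rw [Submodule.comap_map_eq, Submodule.ker_mkQ, sup_eq_left.mpr hXB]
        calc B = Submodule.comap π (Submodule.map π B) := h3.symm
          _ = Submodule.comap π ⊤ := by rw [h2]
          _ = ⊤ := Submodule.comap_top π
    have hzN : z ∈ N := (Submodule.mem_sInf.mp hz) N hNco
    exact hzC hzN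
end
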